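/- arXiv:1001.0147 — 3 statements merged into one kernel-verified Lean document; each statement's English description precedes it below -/
import Mathlib

section
/- Let A be as in the single-eigenvalue setup. Then for all y, y' ∈ ℝ^{n₀+r}: (1) the Hausdorff distance with respect to D_A between the fibers satisfies HD(π_A⁻¹(y), π_A⁻¹(y')) = |y − y'|^{1/λ} (Euclidean norm on ℝ^{n₀+r}); (2) for every point p ∈ π_A⁻¹(y), the distance inf{ D_A(p, q) : q ∈ π_A⁻¹(y') } = |y − y'|^{1/λ}. -/
open scoped NNReal ENNReal

noncomputable section

/-- Action of a matrix on Euclidean space. -/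
def matVec {ι : Type*} [Fintype ι] (M : Matrix ι ι ℝ) (v : EuclideanSpace ℝ ι) :
    EuclideanSpace ℝ ι :=
  (WithLp.equiv 2 (ι → ℝ)).symm (M.mulVec (WithLp.equiv 2 (ι → ℝ) v))

open Classical in
/-- The parabolic visual quasimetric `D_A` associated with a matrix `A`:
`D_A x x = 0`, and for `x ≠ y`, `D_A x y = eᵗ` where `t` is the smallest real number with
`‖exp(-tA)(x-y)‖ = 1`. -/
def parabolicD {ι : Type*} [Fintype ι] [DecidableEq ι] (A : Matrix ι ι ℝ)
    (x y : EuclideanSpace ℝ ι) : ℝ :=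
  if x = y then 0
  else Real.exp (sInf {t : ℝ | ‖matVec (NormedSpace.exp ((-t) • A)) (x - y)‖ = 1})

/-- The nilpotent part: within each Jordan block `i`, ones on the superdiagonal. -/
def jordanNB {r : ℕ} (sz : Fin r → ℕ) :
    Matrix (Σ i : Fin r, Fin (sz i)) (Σ i : Fin r, Fin (sz i)) ℝ :=
  fun p q => if p.1 = q.1 ∧ (q.2 : ℕ) = (p.2 : ℕ) + 1 then 1 else 0

/-- The single-eigenvalue Jordan-form matrix
`A = diag(λ I_{n₀}, λ I_{n₁} + N, …, λ I_{n_r} + N)`. -/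
def singleA (n₀ : ℕ) {r : ℕ} (sz : Fin r → ℕ) (lam : ℝ) :
    Matrix (Fin n₀ ⊕ Σ i : Fin r, Fin (sz i)) (Fin n₀ ⊕ Σ i : Fin r, Fin (sz i)) ℝ :=
  lam • (1 : Matrix _ _ ℝ) + Matrix.fromBlocks 0 0 0 (jordanNB sz)

/-- The projection `π_A : ℝⁿ → ℝ^{n₀+r}`, `p = (z,(x₁,y₁),…,(x_r,y_r)) ↦ (z, y₁, …, y_r)`,
recording the `z`-coordinates and the last coordinate of each Jordan block. -/
def piSingle (n₀ : ℕ) {r : ℕ} (sz : Fin r → ℕ) (hsz : ∀ i, 2 ≤ sz i)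
    (p : EuclideanSpace ℝ (Fin n₀ ⊕ Σ i : Fin r, Fin (sz i))) :
    EuclideanSpace ℝ (Fin n₀ ⊕ Fin r) :=
  (WithLp.equiv 2 _).symm (fun j => match j with
    | Sum.inl a => p (Sum.inl a)
    | Sum.inr i => p (Sum.inr ⟨i, ⟨sz i - 1, by have := hsz i; omega⟩⟩))

/-!
Write `A = λ • 1 + N` with `N` nilpotent. The rows of `N` at the coordinates read by `π_A` vanish,
so `exp (sN)` preserves `π_A`, and since `π_A` is a coordinate projection,
`‖exp (-tA) v‖ ≥ e^{-tλ} ‖π_A v‖`. Hence every `t` with `‖exp (-tA) (p - q)‖ = 1` has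
`e^{tλ} ≥ |π_A p - π_A q|`, i.e. `D_A(p, q) ≥ |π_A p - π_A q|^{1/λ}`; this needs the level set to be
nonempty (as `sInf ∅ = 0`), which follows from the intermediate value theorem because
`exp (-tA) → 0`. The bound is attained at `q = p - exp (t₀ N) (ι d)`, where `d = π_A p - c`,
`ι` is extension by zero and `e^{t₀ λ} = |d|`. So every point of one fiber is at distance exactly
`|y - y'|^{1/λ}` from the other fiber.
-/

open NormedSpace Filter Topology
open scoped Nat

section TopologicalAlgebra

variable {𝔸 : Type*} [Ring 𝔸] [Algebra ℝ 𝔸] [TopologicalSpace 𝔸] [IsTopologicalRing 𝔸]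

theorem exp_smul_eq_sum_of_pow_eq_zero {N : 𝔸} {m : ℕ} (hN : N ^ m = 0) (s : ℝ) :
    exp (s • N) = ∑ k ∈ Finset.range m, (s ^ k / k !) • N ^ k := by
  rw [exp_eq_tsum ℝ]
  dsimp only
  rw [tsum_eq_sum fun k hk => ?_]
  · refine Finset.sum_congr rfl fun k _ => ?_
    rw [smul_pow, smul_smul, div_eq_inv_mul]
  · rw [smul_pow, pow_eq_zero_of_le (by simpa using hk) hN, smul_zero, smul_zero]

end TopologicalAlgebra

section BanachAlgebra

variable {𝔸 : Type*} [NormedRing 𝔸] [NormedAlgebra ℝ 𝔸] [CompleteSpace 𝔸]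

theorem exp_smul_one_add (c : ℝ) (X : 𝔸) : exp (c • 1 + X) = Real.exp c • exp X := by
  let _ : NormedAlgebra ℚ 𝔸 := .restrictScalars ℚ ℝ 𝔸
  rw [exp_add_of_commute ((Commute.one_left X).smul_left c), ← Algebra.algebraMap_eq_smul_one,
    ← algebraMap_exp_comm, Algebra.algebraMap_eq_smul_one, smul_one_mul, Real.exp_eq_exp_ℝ]

theorem tendsto_exp_neg_mul_mul_pow_atTop {lam : ℝ} (hlam : 0 < lam) (k : ℕ) :
    Tendsto (fun t : ℝ => Real.exp (-t * lam) * ((-t) ^ k / k !)) atTop (𝓝 0) := by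
  have h := (tendsto_rpow_mul_exp_neg_mul_atTop_nhds_zero k lam hlam).const_mul ((-1 : ℝ) ^ k / k !)
  rw [mul_zero] at h
  refine h.congr fun t => ?_
  rw [Real.rpow_natCast, neg_pow' t k]
  ring_nf

theorem tendsto_exp_neg_smul_smul_one_add_atTop {lam : ℝ} (hlam : 0 < lam) {N : 𝔸}
    (hN : IsNilpotent N) :
    Tendsto (fun t : ℝ => exp ((-t) • (lam • 1 + N))) atTop (𝓝 0) := by
  obtain ⟨m, hm⟩ := hN
  have hexp : ∀ t : ℝ, exp ((-t) • (lam • 1 + N))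
      = ∑ k ∈ Finset.range m, (Real.exp (-t * lam) * ((-t) ^ k / k !)) • N ^ k := by
    intro t
    rw [smul_add, smul_smul, exp_smul_one_add, exp_smul_eq_sum_of_pow_eq_zero hm, Finset.smul_sum]
    simp only [smul_smul]
  simp only [hexp]
  simpa using tendsto_finsetSum (Finset.range m)
    fun k _ => (tendsto_exp_neg_mul_mul_pow_atTop hlam k).smul_const (N ^ k)

end BanachAlgebra

namespace Matrix

variable {ι R : Type*} [Fintype ι] [DecidableEq ι] [Semiring R]

theorem add_le_of_pow_apply_ne_zero {M : Matrix ι ι R} (f : ι → ℕ)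
    (hM : ∀ i j, M i j ≠ 0 → f i < f j) (k : ℕ) (i j : ι) (h : (M ^ k) i j ≠ 0) :
    f i + k ≤ f j := by
  induction k generalizing j with
  | zero =>
    obtain rfl : i = j := by_contra fun hij => h (one_apply_ne hij)
    simp
  | succ k ih =>
    rw [pow_succ, mul_apply] at h
    obtain ⟨l, -, hl⟩ := Finset.exists_ne_zero_of_sum_ne_zero h
    have := ih l (left_ne_zero_of_mul hl)
    have := hM l j (right_ne_zero_of_mul hl)
    omega

theorem isNilpotent_of_apply_ne_zero_lt {M : Matrix ι ι R} (f : ι → ℕ)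
    (hM : ∀ i j, M i j ≠ 0 → f i < f j) : IsNilpotent M := by
  obtain ⟨m, hm⟩ := Finite.exists_le f
  refine ⟨m + 1, ext fun i j => by_contra fun h => ?_⟩
  have := add_le_of_pow_apply_ne_zero f hM _ i j h
  have := hm j
  omega

end Matrix

section MatVec

variable {ι : Type*} [Fintype ι] [DecidableEq ι]

theorem matVec_eq_toEuclideanLin (M : Matrix ι ι ℝ) (v : EuclideanSpace ℝ ι) :
    matVec M v = Matrix.toEuclideanLin M v := rfl

theorem matVec_smul (c : ℝ) (M : Matrix ι ι ℝ) (v : EuclideanSpace ℝ ι) :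
    matVec (c • M) v = c • matVec M v := by
  simp only [matVec_eq_toEuclideanLin, map_smul, LinearMap.smul_apply]

theorem matVec_mul (M N : Matrix ι ι ℝ) (v : EuclideanSpace ℝ ι) :
    matVec (M * N) v = matVec M (matVec N v) := by
  simp only [matVec_eq_toEuclideanLin, Matrix.toLpLin_mul_same, LinearMap.comp_apply]

theorem matVec_one (v : EuclideanSpace ℝ ι) : matVec 1 v = v := by
  simp only [matVec_eq_toEuclideanLin, Matrix.toLpLin_one, LinearMap.id_apply]

theorem matVec_neg (M : Matrix ι ι ℝ) (v : EuclideanSpace ℝ ι) :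
    matVec M (-v) = -matVec M v :=
  map_neg (Matrix.toEuclideanLin M) v

theorem continuous_matVec_left (v : EuclideanSpace ℝ ι) :
    Continuous fun M : Matrix ι ι ℝ => matVec M v :=
  LinearMap.continuous_of_finiteDimensional
    ((LinearMap.applyₗ v).comp (Matrix.toEuclideanLin : Matrix ι ι ℝ ≃ₗ[ℝ] _).toLinearMap)

theorem matVec_exp_neg_smul_matVec_exp_smul (N : Matrix ι ι ℝ) (s : ℝ) (v : EuclideanSpace ℝ ι) :
    matVec (exp ((-s) • N)) (matVec (exp (s • N)) v) = v := by
  rw [← matVec_mul, ← Matrix.exp_add_of_commute _ _ ((Commute.refl N).smul_left _ |>.smul_right _),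
    neg_smul, neg_add_cancel, exp_zero, matVec_one]

theorem matVec_pow_succ_apply_of_row_eq_zero {N : Matrix ι ι ℝ} {j : ι} (hj : ∀ k, N j k = 0)
    (k : ℕ) (v : EuclideanSpace ℝ ι) : matVec (N ^ (k + 1)) v j = 0 := by
  rw [pow_succ', matVec_mul]
  show Matrix.mulVec N _ j = 0
  simp [Matrix.mulVec, dotProduct, hj]

theorem matVec_exp_smul_apply_of_row_eq_zero {N : Matrix ι ι ℝ} (hN : IsNilpotent N) {j : ι}
    (hj : ∀ k, N j k = 0) (s : ℝ) (v : EuclideanSpace ℝ ι) :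
    matVec (exp (s • N)) v j = v j := by
  obtain ⟨m, hm⟩ := hN
  have hm' : N ^ (m + 1) = 0 := by rw [pow_succ, hm, zero_mul]
  rw [exp_smul_eq_sum_of_pow_eq_zero hm', matVec_eq_toEuclideanLin, map_sum,
    LinearMap.sum_apply, WithLp.ofLp_sum, Finset.sum_apply, Finset.sum_range_succ']
  simp only [map_smul, LinearMap.smul_apply, ← matVec_eq_toEuclideanLin, PiLp.smul_apply]
  simp [matVec_pow_succ_apply_of_row_eq_zero hj, matVec_one]

end MatVec

section ParabolicD

variable {ι : Type*} [Fintype ι] [DecidableEq ι]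

theorem parabolicD_nonneg (A : Matrix ι ι ℝ) (x y : EuclideanSpace ℝ ι) :
    0 ≤ parabolicD A x y := by
  unfold parabolicD
  split_ifs
  exacts [le_rfl, (Real.exp_pos _).le]

theorem parabolicD_self (A : Matrix ι ι ℝ) (x : EuclideanSpace ℝ ι) : parabolicD A x x = 0 :=
  if_pos rfl

theorem parabolicD_comm (A : Matrix ι ι ℝ) (x y : EuclideanSpace ℝ ι) :
    parabolicD A x y = parabolicD A y x := by
  by_cases hxy : x = y
  · rw [hxy]
  · simp only [parabolicD, if_neg hxy, if_neg (Ne.symm hxy), ← neg_sub y x, matVec_neg, norm_neg]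

variable {A : Matrix ι ι ℝ} {x y : EuclideanSpace ℝ ι} {s : ℝ}

theorem exp_le_parabolicD (hxy : x ≠ y)
    (hne : ∃ t : ℝ, ‖matVec (exp ((-t) • A)) (x - y)‖ = 1)
    (hs : ∀ t : ℝ, ‖matVec (exp ((-t) • A)) (x - y)‖ = 1 → s ≤ t) :
    Real.exp s ≤ parabolicD A x y := by
  rw [parabolicD, if_neg hxy, Real.exp_le_exp]
  exact le_csInf hne hs

theorem parabolicD_eq_exp (hxy : x ≠ y)
    (hs₁ : ‖matVec (exp ((-s) • A)) (x - y)‖ = 1)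
    (hs : ∀ t : ℝ, ‖matVec (exp ((-t) • A)) (x - y)‖ = 1 → s ≤ t) :
    parabolicD A x y = Real.exp s := by
  have hleast : IsLeast {t : ℝ | ‖matVec (exp ((-t) • A)) (x - y)‖ = 1} s :=
    ⟨hs₁, hs⟩
  rw [parabolicD, if_neg hxy, hleast.csInf_eq]

attribute [local instance] Matrix.linftyOpNormedRing Matrix.linftyOpNormedAlgebra in
theorem continuous_norm_matVec_exp_neg_smul (A : Matrix ι ι ℝ) (v : EuclideanSpace ℝ ι) :
    Continuous fun t : ℝ => ‖matVec (exp ((-t) • A)) v‖ :=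
  ((continuous_matVec_left v).comp (by fun_prop)).norm

theorem exists_norm_matVec_exp_neg_smul_eq_one
    (hA : Tendsto (fun t : ℝ => exp ((-t) • A)) atTop (𝓝 0))
    {v : EuclideanSpace ℝ ι} {t₀ : ℝ} (h : 1 ≤ ‖matVec (exp ((-t₀) • A)) v‖) :
    ∃ t : ℝ, ‖matVec (exp ((-t) • A)) v‖ = 1 := by
  have hdecay : Tendsto (fun t : ℝ => ‖matVec (exp ((-t) • A)) v‖) atTop (𝓝 0) := by
    simpa [matVec] using (((continuous_matVec_left v).tendsto 0).comp hA).norm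
  obtain ⟨t₁, ht₁, ht₀₁⟩ :=
    ((hdecay.eventually_le_const one_pos).and (eventually_ge_atTop t₀)).exists
  obtain ⟨t, -, ht⟩ := intermediate_value_Icc' ht₀₁
    (continuous_norm_matVec_exp_neg_smul A v).continuousOn ⟨ht₁, h⟩
  exact ⟨t, ht⟩

end ParabolicD

namespace EuclideanSpace

variable {κ ι : Type*} [Fintype κ] [Fintype ι] {e : κ → ι}

theorem norm_le_of_comp_eq (he : Function.Injective e) {u : EuclideanSpace ℝ κ}
    {v : EuclideanSpace ℝ ι} (h : ∀ k, v (e k) = u k) : ‖u‖ ≤ ‖v‖ := by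
  classical
  rw [← sq_le_sq₀ (norm_nonneg u) (norm_nonneg v), norm_sq_eq, norm_sq_eq]
  simp only [← h]
  rw [← Finset.sum_image (f := fun i => ‖v i‖ ^ 2) fun x _ y _ hxy => he hxy]
  exact Finset.sum_le_sum_of_subset_of_nonneg (Finset.subset_univ _) fun _ _ _ => by positivity

theorem norm_eq_of_comp_eq (he : Function.Injective e) {u : EuclideanSpace ℝ κ}
    {v : EuclideanSpace ℝ ι} (h : ∀ k, v (e k) = u k) (h₀ : ∀ i ∉ Set.range e, v i = 0) :
    ‖v‖ = ‖u‖ := by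
  classical
  rw [← sq_eq_sq₀ (norm_nonneg v) (norm_nonneg u), norm_sq_eq, norm_sq_eq]
  simp only [← h]
  rw [← Finset.sum_image (f := fun i => ‖v i‖ ^ 2) fun x _ y _ hxy => he hxy]
  refine (Finset.sum_subset (Finset.subset_univ _) fun i _ hi => ?_).symm
  rw [h₀ i fun ⟨k, hk⟩ => hi (Finset.mem_image.2 ⟨k, Finset.mem_univ k, hk⟩), norm_zero]
  norm_num

end EuclideanSpace

theorem iSup₂_eq_of_forall_eq {α ι : Type*} [CompleteLattice α] {P : ι → Prop} {f : ι → α}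
    {a : α} (hP : ∃ i, P i) (h : ∀ i, P i → f i = a) : ⨆ (i) (_ : P i), f i = a :=
  le_antisymm (iSup₂_le fun i hi => (h i hi).le)
    (hP.elim fun i hi => le_iSup₂_of_le i hi (h i hi).ge)

theorem Real.exp_neg_log_div_mul_mul_self {d lam : ℝ} (hd : 0 < d) (hlam : lam ≠ 0) :
    Real.exp (-(Real.log d / lam) * lam) * d = 1 := by
  rw [neg_mul, div_mul_cancel₀ _ hlam, Real.exp_neg, Real.exp_log hd, inv_mul_cancel₀ hd.ne']

section SingleEigenvalue

variable (n₀ : ℕ) {r : ℕ} (sz : Fin r → ℕ)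

def singleN : Matrix (Fin n₀ ⊕ Σ i : Fin r, Fin (sz i)) (Fin n₀ ⊕ Σ i : Fin r, Fin (sz i)) ℝ :=
  Matrix.fromBlocks 0 0 0 (jordanNB sz)

theorem singleA_eq_smul_one_add (lam : ℝ) : singleA n₀ sz lam = lam • 1 + singleN n₀ sz := rfl

theorem isNilpotent_singleN : IsNilpotent (singleN n₀ sz) := by
  refine Matrix.isNilpotent_of_apply_ne_zero_lt (Sum.elim (fun _ => 0) fun x => x.2) ?_
  rintro (a | ⟨i, k⟩) (b | ⟨j, l⟩) h <;> simp_all [singleN, jordanNB]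

section LinftyOpNorm

attribute [local instance] Matrix.linftyOpNormedRing Matrix.linftyOpNormedAlgebra

theorem tendsto_exp_neg_smul_singleA {lam : ℝ} (hlam : 0 < lam) :
    Tendsto (fun t : ℝ => exp ((-t) • singleA n₀ sz lam)) atTop (𝓝 0) :=
  tendsto_exp_neg_smul_smul_one_add_atTop hlam (isNilpotent_singleN n₀ sz)

theorem exp_neg_smul_singleA (lam t : ℝ) :
    exp ((-t) • singleA n₀ sz lam)
      = Real.exp (-t * lam) • exp ((-t) • singleN n₀ sz) := by
  rw [singleA_eq_smul_one_add, smul_add, smul_smul]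
  exact exp_smul_one_add _ _

theorem norm_matVec_exp_neg_smul_singleA (lam t : ℝ)
    (v : EuclideanSpace ℝ (Fin n₀ ⊕ Σ i : Fin r, Fin (sz i))) :
    ‖matVec (exp ((-t) • singleA n₀ sz lam)) v‖
      = Real.exp (-t * lam) * ‖matVec (exp ((-t) • singleN n₀ sz)) v‖ := by
  rw [exp_neg_smul_singleA, matVec_smul, norm_smul, Real.norm_of_nonneg (Real.exp_pos _).le]

end LinftyOpNorm

variable (hsz : ∀ i, 2 ≤ sz i)

def lastIndex : Fin n₀ ⊕ Fin r → Fin n₀ ⊕ Σ i : Fin r, Fin (sz i) :=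
  Sum.map id fun i => ⟨i, ⟨sz i - 1, by have := hsz i; omega⟩⟩

theorem lastIndex_injective : Function.Injective (lastIndex n₀ sz hsz) :=
  Function.injective_id.sumMap fun _ _ h => congrArg Sigma.fst h

theorem piSingle_apply (p : EuclideanSpace ℝ (Fin n₀ ⊕ Σ i : Fin r, Fin (sz i)))
    (j : Fin n₀ ⊕ Fin r) : piSingle n₀ sz hsz p j = p (lastIndex n₀ sz hsz j) := by
  cases j <;> rfl

theorem piSingle_sub (p q : EuclideanSpace ℝ (Fin n₀ ⊕ Σ i : Fin r, Fin (sz i))) :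
    piSingle n₀ sz hsz (p - q) = piSingle n₀ sz hsz p - piSingle n₀ sz hsz q := by
  ext j
  simp only [piSingle_apply, PiLp.sub_apply]

theorem norm_piSingle_le (p : EuclideanSpace ℝ (Fin n₀ ⊕ Σ i : Fin r, Fin (sz i))) :
    ‖piSingle n₀ sz hsz p‖ ≤ ‖p‖ :=
  EuclideanSpace.norm_le_of_comp_eq (lastIndex_injective n₀ sz hsz) fun j =>
    (piSingle_apply n₀ sz hsz p j).symm

def liftSingle (w : EuclideanSpace ℝ (Fin n₀ ⊕ Fin r)) :
    EuclideanSpace ℝ (Fin n₀ ⊕ Σ i : Fin r, Fin (sz i)) :=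
  WithLp.toLp 2 (Function.extend (lastIndex n₀ sz hsz) (fun j => w j) 0)

theorem piSingle_liftSingle (w : EuclideanSpace ℝ (Fin n₀ ⊕ Fin r)) :
    piSingle n₀ sz hsz (liftSingle n₀ sz hsz w) = w := by
  ext j
  rw [piSingle_apply]
  exact (lastIndex_injective n₀ sz hsz).extend_apply _ _ j

theorem piSingle_surjective : Function.Surjective (piSingle n₀ sz hsz) :=
  fun w => ⟨_, piSingle_liftSingle n₀ sz hsz w⟩

theorem norm_liftSingle (w : EuclideanSpace ℝ (Fin n₀ ⊕ Fin r)) :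
    ‖liftSingle n₀ sz hsz w‖ = ‖w‖ :=
  EuclideanSpace.norm_eq_of_comp_eq (lastIndex_injective n₀ sz hsz)
    ((lastIndex_injective n₀ sz hsz).extend_apply _ _)
    fun _ hi => Function.extend_apply' _ _ _ fun ⟨j, hj⟩ => hi ⟨j, hj⟩

theorem singleN_lastIndex_apply (j : Fin n₀ ⊕ Fin r) (k : Fin n₀ ⊕ Σ i : Fin r, Fin (sz i)) :
    singleN n₀ sz (lastIndex n₀ sz hsz j) k = 0 := by
  rcases j with a | i
  · cases k <;> rfl
  rcases k with b | ⟨i', k⟩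
  · rfl
  refine if_neg ?_
  rintro ⟨rfl, hk⟩
  dsimp only at hk
  omega

theorem piSingle_matVec_exp_smul_singleN (s : ℝ)
    (v : EuclideanSpace ℝ (Fin n₀ ⊕ Σ i : Fin r, Fin (sz i))) :
    piSingle n₀ sz hsz (matVec (exp (s • singleN n₀ sz)) v) = piSingle n₀ sz hsz v := by
  ext j
  rw [piSingle_apply, piSingle_apply]
  exact matVec_exp_smul_apply_of_row_eq_zero (isNilpotent_singleN n₀ sz)
    (singleN_lastIndex_apply n₀ sz hsz j) s v

theorem exp_neg_mul_mul_norm_piSingle_le (lam t : ℝ)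
    (v : EuclideanSpace ℝ (Fin n₀ ⊕ Σ i : Fin r, Fin (sz i))) :
    Real.exp (-t * lam) * ‖piSingle n₀ sz hsz v‖
      ≤ ‖matVec (exp ((-t) • singleA n₀ sz lam)) v‖ := by
  rw [norm_matVec_exp_neg_smul_singleA, ← piSingle_matVec_exp_smul_singleN n₀ sz hsz (-t) v]
  gcongr
  exact norm_piSingle_le n₀ sz hsz _

end SingleEigenvalue

section Fibers

variable {n₀ : ℕ} {r : ℕ} {sz : Fin r → ℕ} {hsz : ∀ i, 2 ≤ sz i} {lam : ℝ}

theorem log_div_le_of_norm_matVec_exp_neg_smul_singleA_eq_one (hlam : 0 < lam)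
    {v : EuclideanSpace ℝ (Fin n₀ ⊕ Σ i : Fin r, Fin (sz i))} (hv : piSingle n₀ sz hsz v ≠ 0)
    {t : ℝ} (ht : ‖matVec (exp ((-t) • singleA n₀ sz lam)) v‖ = 1) :
    Real.log ‖piSingle n₀ sz hsz v‖ / lam ≤ t := by
  have h := exp_neg_mul_mul_norm_piSingle_le n₀ sz hsz lam t v
  rw [ht, neg_mul, Real.exp_neg, inv_mul_le_iff₀ (Real.exp_pos _), mul_one] at h
  rw [div_le_iff₀ hlam]
  exact (Real.log_le_iff_le_exp (norm_pos_iff.2 hv)).2 h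

theorem rpow_le_parabolicD_singleA (hlam : 0 < lam)
    (p q : EuclideanSpace ℝ (Fin n₀ ⊕ Σ i : Fin r, Fin (sz i))) :
    ‖piSingle n₀ sz hsz p - piSingle n₀ sz hsz q‖ ^ (1 / lam)
      ≤ parabolicD (singleA n₀ sz lam) p q := by
  by_cases hpq : piSingle n₀ sz hsz p = piSingle n₀ sz hsz q
  · rw [hpq, sub_self, norm_zero, Real.zero_rpow (one_div_pos.2 hlam).ne']
    exact parabolicD_nonneg _ _ _
  have hv : piSingle n₀ sz hsz (p - q) ≠ 0 := by rwa [piSingle_sub, sub_ne_zero]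
  have hd := norm_pos_iff.2 hv
  rw [← piSingle_sub, Real.rpow_def_of_pos hd, mul_one_div]
  refine exp_le_parabolicD (fun h => hpq (h ▸ rfl)) ?_
    fun t ht => log_div_le_of_norm_matVec_exp_neg_smul_singleA_eq_one hlam hv ht
  exact exists_norm_matVec_exp_neg_smul_eq_one (tendsto_exp_neg_smul_singleA n₀ sz hlam)
    ((Real.exp_neg_log_div_mul_mul_self hd hlam.ne').symm.le.trans
      (exp_neg_mul_mul_norm_piSingle_le n₀ sz hsz lam _ _))

theorem exists_parabolicD_singleA_eq (hlam : 0 < lam)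
    (p : EuclideanSpace ℝ (Fin n₀ ⊕ Σ i : Fin r, Fin (sz i)))
    (c : EuclideanSpace ℝ (Fin n₀ ⊕ Fin r)) :
    ∃ q, piSingle n₀ sz hsz q = c ∧
      parabolicD (singleA n₀ sz lam) p q = ‖piSingle n₀ sz hsz p - c‖ ^ (1 / lam) := by
  by_cases hpc : piSingle n₀ sz hsz p = c
  · refine ⟨p, hpc, ?_⟩
    rw [parabolicD_self, hpc, sub_self, norm_zero, Real.zero_rpow (one_div_pos.2 hlam).ne']
  set d := piSingle n₀ sz hsz p - c
  have hd : 0 < ‖d‖ := norm_pos_iff.2 (sub_ne_zero.2 hpc)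
  set t₀ := Real.log ‖d‖ / lam
  -- `π w = d`, and `exp (-t₀ A) w = e^{-t₀ λ} • liftSingle d` is a unit vector.
  set w := matVec (exp (t₀ • singleN n₀ sz)) (liftSingle n₀ sz hsz d)
  have hw : piSingle n₀ sz hsz w = d := by
    rw [piSingle_matVec_exp_smul_singleN, piSingle_liftSingle]
  have hpw : piSingle n₀ sz hsz (p - (p - w)) = d := by rw [sub_sub_cancel, hw]
  refine ⟨p - w, by rw [piSingle_sub, hw, sub_sub_cancel], ?_⟩
  rw [Real.rpow_def_of_pos hd, mul_one_div]
  refine parabolicD_eq_exp ?_ ?_ fun t ht => ?_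
  · intro h
    apply hd.ne'
    rw [← hpw, ← h, piSingle_sub, sub_self, norm_zero]
  · rw [sub_sub_cancel, norm_matVec_exp_neg_smul_singleA, matVec_exp_neg_smul_matVec_exp_smul,
      norm_liftSingle, Real.exp_neg_log_div_mul_mul_self hd hlam.ne']
  · have := log_div_le_of_norm_matVec_exp_neg_smul_singleA_eq_one hlam
      (by rw [hpw]; exact sub_ne_zero.2 hpc) ht
    rwa [hpw] at this

theorem iInf_parabolicD_singleA_fiber (hlam : 0 < lam)
    {p : EuclideanSpace ℝ (Fin n₀ ⊕ Σ i : Fin r, Fin (sz i))}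
    {b : EuclideanSpace ℝ (Fin n₀ ⊕ Fin r)}
    (hp : piSingle n₀ sz hsz p = b) (c : EuclideanSpace ℝ (Fin n₀ ⊕ Fin r)) :
    ⨅ (q) (_ : piSingle n₀ sz hsz q = c), ENNReal.ofReal (parabolicD (singleA n₀ sz lam) p q)
      = ENNReal.ofReal (‖b - c‖ ^ (1 / lam)) := by
  subst hp
  obtain ⟨q₀, hq₀, hD⟩ := exists_parabolicD_singleA_eq hlam p c
  refine le_antisymm (iInf₂_le_of_le q₀ hq₀ (hD ▸ le_rfl)) (le_iInf₂ fun q hq => ?_)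
  exact ENNReal.ofReal_le_ofReal (hq ▸ rpow_le_parabolicD_singleA hlam p q)

end Fibers

theorem hausdorff_distance_of_fibers_general {n₀ : ℕ} {r : ℕ} (sz : Fin r → ℕ)
    (hsz : ∀ i, 2 ≤ sz i) (lam : ℝ) (hlam : 0 < lam)
    (y y' : EuclideanSpace ℝ (Fin n₀ ⊕ Fin r)) :
    (max
        (⨆ (p : EuclideanSpace ℝ (Fin n₀ ⊕ Σ i : Fin r, Fin (sz i)))
            (_ : piSingle n₀ sz hsz p = y),
          ⨅ (q : EuclideanSpace ℝ (Fin n₀ ⊕ Σ i : Fin r, Fin (sz i)))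
            (_ : piSingle n₀ sz hsz q = y'),
            ENNReal.ofReal (parabolicD (singleA n₀ sz lam) p q))
        (⨆ (q : EuclideanSpace ℝ (Fin n₀ ⊕ Σ i : Fin r, Fin (sz i)))
            (_ : piSingle n₀ sz hsz q = y'),
          ⨅ (p : EuclideanSpace ℝ (Fin n₀ ⊕ Σ i : Fin r, Fin (sz i)))
            (_ : piSingle n₀ sz hsz p = y),
            ENNReal.ofReal (parabolicD (singleA n₀ sz lam) p q))
      = ENNReal.ofReal (‖y - y'‖ ^ (1 / lam))) ∧
    ∀ p : EuclideanSpace ℝ (Fin n₀ ⊕ Σ i : Fin r, Fin (sz i)), piSingle n₀ sz hsz p = y →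
      (⨅ (q : EuclideanSpace ℝ (Fin n₀ ⊕ Σ i : Fin r, Fin (sz i)))
          (_ : piSingle n₀ sz hsz q = y'),
        ENNReal.ofReal (parabolicD (singleA n₀ sz lam) p q))
        = ENNReal.ofReal (‖y - y'‖ ^ (1 / lam)) := by
  refine ⟨?_, fun p hp => iInf_parabolicD_singleA_fiber hlam hp y'⟩
  rw [iSup₂_eq_of_forall_eq (piSingle_surjective n₀ sz hsz y)
      fun p hp => iInf_parabolicD_singleA_fiber hlam hp y',
    iSup₂_eq_of_forall_eq (piSingle_surjective n₀ sz hsz y') fun q hq => ?_, max_self]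
  simp_rw [parabolicD_comm _ _ q]
  rw [iInf_parabolicD_singleA_fiber hlam hq y, norm_sub_rev]

/-- (1) The Hausdorff distance (w.r.t. `D_A`) between the fibers `π_A⁻¹(y)` and `π_A⁻¹(y')`
equals `|y - y'|^{1/λ}`; (2) every point of `π_A⁻¹(y)` is at `D_A`-distance exactly
`|y - y'|^{1/λ}` from `π_A⁻¹(y')`. -/
theorem hausdorff_distance_of_fibers {n₀ : ℕ} {r : ℕ} (hr : 1 ≤ r) (sz : Fin r → ℕ)
    (hsz : ∀ i, 2 ≤ sz i) (lam : ℝ) (hlam : 0 < lam)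
    (y y' : EuclideanSpace ℝ (Fin n₀ ⊕ Fin r)) :
    (max
        (⨆ (p : EuclideanSpace ℝ (Fin n₀ ⊕ Σ i : Fin r, Fin (sz i)))
            (_ : piSingle n₀ sz hsz p = y),
          ⨅ (q : EuclideanSpace ℝ (Fin n₀ ⊕ Σ i : Fin r, Fin (sz i)))
            (_ : piSingle n₀ sz hsz q = y'),
            ENNReal.ofReal (parabolicD (singleA n₀ sz lam) p q))
        (⨆ (q : EuclideanSpace ℝ (Fin n₀ ⊕ Σ i : Fin r, Fin (sz i)))
            (_ : piSingle n₀ sz hsz q = y'),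
          ⨅ (p : EuclideanSpace ℝ (Fin n₀ ⊕ Σ i : Fin r, Fin (sz i)))
            (_ : piSingle n₀ sz hsz p = y),
            ENNReal.ofReal (parabolicD (singleA n₀ sz lam) p q))
      = ENNReal.ofReal (‖y - y'‖ ^ (1 / lam))) ∧
    ∀ p : EuclideanSpace ℝ (Fin n₀ ⊕ Σ i : Fin r, Fin (sz i)), piSingle n₀ sz hsz p = y →
      (⨅ (q : EuclideanSpace ℝ (Fin n₀ ⊕ Σ i : Fin r, Fin (sz i)))
          (_ : piSingle n₀ sz hsz q = y'),
        ENNReal.ofReal (parabolicD (singleA n₀ sz lam) p q))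
        = ENNReal.ofReal (‖y - y'‖ ^ (1 / lam)) :=
  hausdorff_distance_of_fibers_general sz hsz lam hlam y y'
end
end

section
/- Let c₃ : ℝ² → ℝ be continuous, let g : ℝ → ℝ, and let L ≥ 0 be a constant such that for all u ∈ ℝ and all distinct v, v' ∈ ℝ: | ( c₃(u + (v'−v)·ln|v'−v|, v') − c₃(u, v) ) − ln|v'−v| · ( g(v') − g(v) ) | ≤ L·|v'−v|. If g is differentiable at a point v ∈ ℝ, then c₃(u, v) = c₃(0, v) + g'(v)·u for all u ∈ ℝ. -/
open Topology

/-- Lemma 6.5: under the functional inequality relating `c₃` and `g`, if `g` is differentiable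
at `v` then `c₃(·, v)` is affine with slope `g'(v)`. -/
theorem c3_affine_of_differentiable (c₃ : ℝ → ℝ → ℝ)
    (hc : Continuous fun p : ℝ × ℝ => c₃ p.1 p.2)
    (g : ℝ → ℝ) (L : ℝ) (hL : 0 ≤ L)
    (h : ∀ u v v' : ℝ, v ≠ v' →
      |c₃ (u + (v' - v) * Real.log |v' - v|) v' - c₃ u v
          - Real.log |v' - v| * (g v' - g v)| ≤ L * |v' - v|)
    (v : ℝ) (hg : DifferentiableAt ℝ g v) :
    ∀ u : ℝ, c₃ u v = c₃ 0 v + deriv g v * u := by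
  intro u
  rcases eq_or_ne u 0 with rfl | hu
  · simp
  -- chaining lemma: n+1 equal steps of size d
  have key : ∀ n : ℕ, ∀ y a d : ℝ, d ≠ 0 →
      |c₃ (y + (n + 1 : ℝ) * (d * Real.log |d|)) (a + (n + 1 : ℝ) * d) - c₃ y a
        - Real.log |d| * (g (a + (n + 1 : ℝ) * d) - g a)| ≤ (n + 1 : ℝ) * (L * |d|) := by
    intro n
    induction n with
    | zero =>
      intro y a d hd
      have h1 := h y a (a + d) (by intro hh; exact hd (by linarith))
      have e1 : a + d - a = d := by ring
      rw [e1] at h1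
      have e2 : y + ((0 : ℕ) + 1 : ℝ) * (d * Real.log |d|) = y + d * Real.log |d| := by
        push_cast; ring
      have e3 : a + ((0 : ℕ) + 1 : ℝ) * d = a + d := by push_cast; ring
      rw [e2, e3]
      calc |c₃ (y + d * Real.log |d|) (a + d) - c₃ y a - Real.log |d| * (g (a + d) - g a)|
          ≤ L * |d| := h1
        _ = ((0 : ℕ) + 1 : ℝ) * (L * |d|) := by push_cast; ring
    | succ n ih =>
      intro y a d hd
      have h1 := ih y a d hd
      have h2 := h (y + (n + 1 : ℝ) * (d * Real.log |d|)) (a + (n + 1 : ℝ) * d)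
        (a + (n + 1 : ℝ) * d + d) (by intro hh; exact hd (by linarith))
      have e1 : a + (n + 1 : ℝ) * d + d - (a + (n + 1 : ℝ) * d) = d := by ring
      rw [e1] at h2
      have e2 : y + (n + 1 : ℝ) * (d * Real.log |d|) + d * Real.log |d|
          = y + ((n + 1 : ℕ) + 1 : ℝ) * (d * Real.log |d|) := by push_cast; ring
      have e3 : a + (n + 1 : ℝ) * d + d = a + ((n + 1 : ℕ) + 1 : ℝ) * d := by push_cast; ring
      rw [e2, e3] at h2
      calc |c₃ (y + ((n + 1 : ℕ) + 1 : ℝ) * (d * Real.log |d|)) (a + ((n + 1 : ℕ) + 1 : ℝ) * d)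
            - c₃ y a - Real.log |d| * (g (a + ((n + 1 : ℕ) + 1 : ℝ) * d) - g a)|
          = |(c₃ (y + ((n + 1 : ℕ) + 1 : ℝ) * (d * Real.log |d|)) (a + ((n + 1 : ℕ) + 1 : ℝ) * d)
              - c₃ (y + (n + 1 : ℝ) * (d * Real.log |d|)) (a + (n + 1 : ℝ) * d)
              - Real.log |d| * (g (a + ((n + 1 : ℕ) + 1 : ℝ) * d) - g (a + (n + 1 : ℝ) * d)))
            + (c₃ (y + (n + 1 : ℝ) * (d * Real.log |d|)) (a + (n + 1 : ℝ) * d) - c₃ y a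
              - Real.log |d| * (g (a + (n + 1 : ℝ) * d) - g a))| := by congr 1; ring
        _ ≤ _ + _ := abs_add_le _ _
        _ ≤ L * |d| + (n + 1 : ℝ) * (L * |d|) := add_le_add h2 h1
        _ = ((n + 1 : ℕ) + 1 : ℝ) * (L * |d|) := by push_cast; ring
  -- star: shift by exactly t * log(m+1)
  have star : ∀ (m : ℕ) (t : ℝ), t ≠ 0 →
      |c₃ (t * Real.log (m + 1)) v - c₃ 0 v - Real.log (m + 1) * (g (v + t) - g v)|
        ≤ 2 * L * |t| := by
    intro m t ht
    have h1 := h 0 v (v + t) (by intro hh; exact ht (by linarith))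
    have e1 : v + t - v = t := by ring
    rw [e1] at h1
    have hm1 : (0 : ℝ) < (m : ℝ) + 1 := by positivity
    have hd : (-t / ((m : ℝ) + 1)) ≠ 0 := div_ne_zero (neg_ne_zero.2 ht) (ne_of_gt hm1)
    have h2 := key m (0 + t * Real.log |t|) (v + t) (-t / ((m : ℝ) + 1)) hd
    have habs : |(-t / ((m : ℝ) + 1))| = |t| / ((m : ℝ) + 1) := by
      rw [abs_div, abs_neg, abs_of_pos hm1]
    rw [habs] at h2
    have hlog : Real.log (|t| / ((m : ℝ) + 1)) = Real.log |t| - Real.log ((m : ℝ) + 1) :=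
      Real.log_div (abs_ne_zero.2 ht) (ne_of_gt hm1)
    rw [hlog] at h2
    have e2 : v + t + ((m : ℝ) + 1) * (-t / ((m : ℝ) + 1)) = v := by field_simp; ring
    have e3 : 0 + t * Real.log |t|
        + ((m : ℝ) + 1) * (-t / ((m : ℝ) + 1) * (Real.log |t| - Real.log ((m : ℝ) + 1)))
        = t * Real.log ((m : ℝ) + 1) := by field_simp; ring
    have e4 : ((m : ℝ) + 1) * (L * (|t| / ((m : ℝ) + 1))) = L * |t| := by field_simp
    rw [e2, e3, e4] at h2
    calc |c₃ (t * Real.log ((m : ℝ) + 1)) v - c₃ 0 v - Real.log ((m : ℝ) + 1) * (g (v + t) - g v)|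
        = |(c₃ (t * Real.log ((m : ℝ) + 1)) v - c₃ (0 + t * Real.log |t|) (v + t)
            - (Real.log |t| - Real.log ((m : ℝ) + 1)) * (g v - g (v + t)))
          + (c₃ (0 + t * Real.log |t|) (v + t) - c₃ 0 v - Real.log |t| * (g (v + t) - g v))| := by
          congr 1; ring
      _ ≤ _ + _ := abs_add_le _ _
      _ ≤ L * |t| + L * |t| := add_le_add h2 h1
      _ = 2 * L * |t| := by ring
  -- limit argument
  have hlogten : Filter.Tendsto (fun m : ℕ => Real.log ((m : ℝ) + 1)) Filter.atTop Filter.atTop := by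
    apply Real.tendsto_log_atTop.comp
    exact Filter.tendsto_atTop_add_const_right _ 1 tendsto_natCast_atTop_atTop
  have hpos : ∀ᶠ m : ℕ in Filter.atTop, 0 < Real.log ((m : ℝ) + 1) :=
    hlogten.eventually_gt_atTop 0
  set c := deriv g v with hc'
  have htto : Filter.Tendsto (fun m : ℕ => u / Real.log ((m : ℝ) + 1)) Filter.atTop (𝓝 0) :=
    Filter.Tendsto.div_atTop tendsto_const_nhds hlogten
  have lim2 : Filter.Tendsto
      (fun m : ℕ => Real.log ((m : ℝ) + 1) * (g (v + u / Real.log ((m : ℝ) + 1)) - g v))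
      Filter.atTop (𝓝 (c * u)) := by
    have h1 : Filter.Tendsto (slope g v) (nhdsWithin v {v}ᶜ) (𝓝 c) :=
      hasDerivAt_iff_tendsto_slope.mp hg.hasDerivAt
    have h2 : Filter.Tendsto (fun m : ℕ => v + u / Real.log ((m : ℝ) + 1)) Filter.atTop
        (nhdsWithin v {v}ᶜ) := by
      rw [tendsto_nhdsWithin_iff]
      constructor
      · have h0 : Filter.Tendsto (fun _ : ℕ => v) Filter.atTop (𝓝 v) := tendsto_const_nhds
        simpa using h0.add htto
      · filter_upwards [hpos] with m hm
        have : u / Real.log ((m : ℝ) + 1) ≠ 0 := div_ne_zero hu (ne_of_gt hm)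
        simp only [Set.mem_compl_iff, Set.mem_singleton_iff]
        intro hh
        exact this (by linarith)
    have h3 := (h1.comp h2).mul_const u
    refine h3.congr' ?_
    filter_upwards [hpos] with m hm
    have hlm : Real.log ((m : ℝ) + 1) ≠ 0 := ne_of_gt hm
    show slope g v (v + u / Real.log ((m : ℝ) + 1)) * u = _
    rw [slope_def_field]
    have : v + u / Real.log ((m : ℝ) + 1) - v = u / Real.log ((m : ℝ) + 1) := by ring
    rw [this]
    field_simp
  have lim1 : Filter.Tendsto
      (fun m : ℕ => Real.log ((m : ℝ) + 1) * (g (v + u / Real.log ((m : ℝ) + 1)) - g v))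
      Filter.atTop (𝓝 (c₃ u v - c₃ 0 v)) := by
    have hbd : ∀ᶠ m : ℕ in Filter.atTop,
        ‖(c₃ u v - c₃ 0 v)
          - Real.log ((m : ℝ) + 1) * (g (v + u / Real.log ((m : ℝ) + 1)) - g v)‖
        ≤ 2 * L * |u| / Real.log ((m : ℝ) + 1) := by
      filter_upwards [hpos] with m hm
      have hlm : Real.log ((m : ℝ) + 1) ≠ 0 := ne_of_gt hm
      have hst := star m (u / Real.log ((m : ℝ) + 1)) (div_ne_zero hu hlm)
      have e : u / Real.log ((m : ℝ) + 1) * Real.log ((m : ℝ) + 1) = u :=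
        div_mul_cancel₀ u hlm
      rw [e] at hst
      rw [Real.norm_eq_abs]
      calc |c₃ u v - c₃ 0 v
            - Real.log ((m : ℝ) + 1) * (g (v + u / Real.log ((m : ℝ) + 1)) - g v)|
          ≤ 2 * L * |u / Real.log ((m : ℝ) + 1)| := hst
        _ = 2 * L * |u| / Real.log ((m : ℝ) + 1) := by
            rw [abs_div, abs_of_pos hm]; ring
    have hz : Filter.Tendsto (fun m : ℕ => 2 * L * |u| / Real.log ((m : ℝ) + 1))
        Filter.atTop (𝓝 0) := Filter.Tendsto.div_atTop tendsto_const_nhds hlogten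
    have hsq := squeeze_zero_norm' hbd hz
    have := (tendsto_const_nhds (x := c₃ u v - c₃ 0 v) (f := Filter.atTop (α := ℕ))).sub hsq
    rw [sub_zero] at this
    refine this.congr ?_
    intro m
    ring
  have := tendsto_nhds_unique lim1 lim2
  linarith
end

section
/- Let c₃ : ℝ² → ℝ be continuous, let g : ℝ → ℝ, and let L ≥ 0 be a constant such that for all u ∈ ℝ and all distinct v, v' ∈ ℝ: | ( c₃(u + (v'−v)·ln|v'−v|, v') − c₃(u, v) ) − ln|v'−v| · ( g(v') − g(v) ) | ≤ L·|v'−v|. If g is differentiable at two points v₁, v₂ ∈ ℝ, then g'(v₁) = g'(v₂). -/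
open Real Filter Topology

private lemma chain_lemma (c₃ : ℝ → ℝ → ℝ) (g : ℝ → ℝ) (L : ℝ)
    (h : ∀ u v v' : ℝ, v ≠ v' →
      |c₃ (u + (v' - v) * Real.log |v' - v|) v' - c₃ u v
          - Real.log |v' - v| * (g v' - g v)| ≤ L * |v' - v|)
    (u v t : ℝ) (ht : t ≠ 0) :
    ∀ k : ℕ, |c₃ (u + k * (t * Real.log |t|)) (v + k * t) - c₃ u v
      - Real.log |t| * (g (v + k * t) - g v)| ≤ k * (L * |t|) := by
  intro k
  induction k with
  | zero => simp
  | succ k ih =>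
    have hne : v + (k:ℝ) * t ≠ (v + (k:ℝ) * t) + t := by
      intro hh
      apply ht
      linarith [hh]
    have hstep := h (u + (k:ℝ) * (t * Real.log |t|)) (v + (k:ℝ) * t) ((v + (k:ℝ) * t) + t) hne
    rw [add_sub_cancel_left] at hstep
    have e1 : v + ((k:ℕ)+1 : ℕ) * t = (v + (k:ℝ) * t) + t := by push_cast; ring
    have e2 : u + ((k:ℕ)+1 : ℕ) * (t * Real.log |t|)
        = (u + (k:ℝ) * (t * Real.log |t|)) + t * Real.log |t| := by push_cast; ring
    rw [e1, e2]
    have hx := abs_le.mp hstep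
    have hy := abs_le.mp ih
    rw [abs_le]
    push_cast
    constructor <;> nlinarith [hx.1, hx.2, hy.1, hy.2]

private lemma relA (c₃ : ℝ → ℝ → ℝ) (g : ℝ → ℝ) (L : ℝ)
    (h : ∀ u v v' : ℝ, v ≠ v' →
      |c₃ (u + (v' - v) * Real.log |v' - v|) v' - c₃ u v
          - Real.log |v' - v| * (g v' - g v)| ≤ L * |v' - v|)
    (w v T : ℝ) (hT : T ≠ 0) (n : ℕ) (hn : 1 ≤ n) :
    |c₃ (w - T * Real.log n) (v + T) - c₃ w (v + T)
      + Real.log n * (g (v + T) - g v)| ≤ 2 * (L * |T|) := by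
  have hn0 : (n:ℝ) ≠ 0 := Nat.cast_ne_zero.mpr (by omega)
  have ht' : T / (n:ℝ) ≠ 0 := div_ne_zero hT hn0
  have hlog : Real.log |T / (n:ℝ)| = Real.log |T| - Real.log n := by
    rw [abs_div, Nat.abs_cast, Real.log_div (abs_ne_zero.mpr hT) hn0]
  have hchain := chain_lemma c₃ g L h (w - T * Real.log |T|) v (T / (n:ℝ)) ht' n
  rw [hlog] at hchain
  rw [show w - T * Real.log |T| + (n:ℝ) * (T / (n:ℝ) * (Real.log |T| - Real.log n))
      = w - T * Real.log n from by field_simp; ring] at hchain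
  rw [show v + (n:ℝ) * (T / (n:ℝ)) = v + T from by field_simp] at hchain
  rw [show (n:ℝ) * (L * |T / (n:ℝ)|) = L * |T| from by
    rw [abs_div, Nat.abs_cast]; field_simp] at hchain
  have hne : v ≠ v + T := fun hh => hT (by linarith [hh])
  have hsingle := h (w - T * Real.log |T|) v (v + T) hne
  rw [add_sub_cancel_left] at hsingle
  rw [show w - T * Real.log |T| + T * Real.log |T| = w from by ring] at hsingle
  have hx := abs_le.mp hchain
  have hy := abs_le.mp hsingle
  rw [abs_le]
  constructor <;> nlinarith [hx.1, hx.2, hy.1, hy.2]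

private lemma key_bound (c₃ : ℝ → ℝ → ℝ) (g : ℝ → ℝ) (L : ℝ)
    (h : ∀ u v v' : ℝ, v ≠ v' →
      |c₃ (u + (v' - v) * Real.log |v' - v|) v' - c₃ u v
          - Real.log |v' - v| * (g v' - g v)| ≤ L * |v' - v|)
    (v T : ℝ) (hT : T ≠ 0) (n : ℕ) (hn : 1 ≤ n) :
    |Real.log n * ((g (v + T) - g v) - 2 * (g (v + T) - g (v + T/2)))|
      ≤ 3 * (L * |T|) := by
  have hn0 : (n:ℝ) ≠ 0 := Nat.cast_ne_zero.mpr (by omega)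
  have ht2 : T / 2 ≠ 0 := div_ne_zero hT two_ne_zero
  have hn2 : 1 ≤ n * n := Nat.one_le_iff_ne_zero.mpr (by positivity)
  have E1 := relA c₃ g L h 0 v T hT n hn
  have E2 := relA c₃ g L h 0 (v + T/2) (T/2) ht2 (n * n) hn2
  push_cast at E2
  rw [Real.log_mul hn0 hn0] at E2
  rw [show v + T/2 + T/2 = v + T from by ring] at E2
  rw [show (0:ℝ) - T/2 * (Real.log n + Real.log n) = 0 - T * Real.log n from by ring] at E2
  rw [show |T/2| = |T|/2 from by rw [abs_div]; norm_num] at E2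
  have hx := abs_le.mp E1
  have hy := abs_le.mp E2
  rw [abs_le]
  constructor <;> nlinarith [hx.1, hx.2, hy.1, hy.2]

private lemma doubling (c₃ : ℝ → ℝ → ℝ) (g : ℝ → ℝ) (L : ℝ) (hL : 0 ≤ L)
    (h : ∀ u v v' : ℝ, v ≠ v' →
      |c₃ (u + (v' - v) * Real.log |v' - v|) v' - c₃ u v
          - Real.log |v' - v| * (g v' - g v)| ≤ L * |v' - v|)
    (v T : ℝ) (hT : T ≠ 0) :
    g (v + T) - g v = 2 * (g (v + T) - g (v + T/2)) := by
  by_contra hne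
  set D := (g (v + T) - g v) - 2 * (g (v + T) - g (v + T/2)) with hD
  have hD0 : D ≠ 0 := sub_ne_zero.mpr hne
  have hDpos : 0 < |D| := abs_pos.mpr hD0
  obtain ⟨n, hnx⟩ := exists_nat_gt (Real.exp ((3 * (L * |T|) + 1) / |D|))
  have hnpos : (0:ℝ) < n := lt_trans (Real.exp_pos _) hnx
  have hn1 : 1 ≤ n := by exact_mod_cast Nat.one_le_iff_ne_zero.mpr (by
    intro hh; rw [hh] at hnpos; norm_num at hnpos)
  have hlogn : (3 * (L * |T|) + 1) / |D| ≤ Real.log n :=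
    (Real.le_log_iff_exp_le hnpos).mpr hnx.le
  have hkey := key_bound c₃ g L h v T hT n hn1
  have hlognn : 0 ≤ Real.log n := le_trans (by positivity) hlogn
  rw [← hD, abs_mul, abs_of_nonneg hlognn] at hkey
  have hmul := mul_le_mul_of_nonneg_right hlogn (abs_nonneg D)
  rw [div_mul_cancel₀ _ (ne_of_gt hDpos)] at hmul
  nlinarith [hkey, hmul]

private lemma secant (c₃ : ℝ → ℝ → ℝ) (g : ℝ → ℝ) (L : ℝ) (hL : 0 ≤ L)
    (h : ∀ u v v' : ℝ, v ≠ v' →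
      |c₃ (u + (v' - v) * Real.log |v' - v|) v' - c₃ u v
          - Real.log |v' - v| * (g v' - g v)| ≤ L * |v' - v|)
    (v : ℝ) (hg : DifferentiableAt ℝ g v) (T : ℝ) (hT : T ≠ 0) :
    g (v + T) - g v = T * deriv g v := by
  have half : ∀ S : ℝ, S ≠ 0 → g (v + S/2) - g v = (g (v + S) - g v) / 2 := by
    intro S hS
    have := doubling c₃ g L hL h v S hS
    linarith
  have iter : ∀ k : ℕ, g (v + T / 2 ^ k) - g v = (g (v + T) - g v) / 2 ^ k := by
    intro k
    induction k with
    | zero => simp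
    | succ k ih =>
      have hS : T / 2 ^ k ≠ 0 := div_ne_zero hT (by positivity)
      have h2 := half (T / 2 ^ k) hS
      rw [show T / 2 ^ k / 2 = T / 2 ^ (k + 1) from by rw [pow_succ]; ring] at h2
      rw [h2, ih, pow_succ]
      ring
  have hA : Tendsto (fun k : ℕ => T / 2 ^ k) atTop (𝓝 0) := by
    have hp : Tendsto (fun k : ℕ => ((1:ℝ)/2) ^ k) atTop (𝓝 0) :=
      tendsto_pow_atTop_nhds_zero_of_lt_one (by norm_num) (by norm_num)
    have := hp.const_mul T
    simp only [mul_zero] at this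
    convert this using 2 with k
    rw [div_pow, one_pow, mul_one_div]
  have hnhds : Tendsto (fun k : ℕ => v + T / 2 ^ k) atTop (𝓝 v) := by
    have h0 : Tendsto (fun _ : ℕ => v) atTop (𝓝 v) := tendsto_const_nhds
    simpa using h0.add hA
  have hT2 : Tendsto (fun k : ℕ => v + T / 2 ^ k) atTop (𝓝[≠] v) := by
    apply tendsto_nhdsWithin_of_tendsto_nhds_of_eventually_within _ hnhds
    filter_upwards with k
    simp only [Set.mem_compl_iff, Set.mem_singleton_iff]
    have hne0 : T / 2 ^ k ≠ 0 := div_ne_zero hT (by positivity)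
    intro hh
    exact hne0 (by linarith)
  have hs := hg.hasDerivAt
  rw [hasDerivAt_iff_tendsto_slope] at hs
  have hcomp := hs.comp hT2
  have heq : (fun k : ℕ => slope g v (v + T / 2 ^ k))
      = fun _ : ℕ => (g (v + T) - g v) / T := by
    funext k
    rw [slope_def_field, iter k, show v + T / 2 ^ k - v = T / 2 ^ k from by ring]
    have h2k : ((2:ℝ)) ^ k ≠ 0 := by positivity
    field_simp
  rw [Function.comp_def] at hcomp
  rw [heq] at hcomp
  have hu := tendsto_nhds_unique hcomp tendsto_const_nhds
  field_simp at hu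
  linarith [hu]

/-- Lemma 6.6: under the functional inequality relating `c₃` and `g`, the derivative of `g`
takes the same value at any two points of differentiability. -/
theorem deriv_g_constant (c₃ : ℝ → ℝ → ℝ)
    (hc : Continuous fun p : ℝ × ℝ => c₃ p.1 p.2)
    (g : ℝ → ℝ) (L : ℝ) (hL : 0 ≤ L)
    (h : ∀ u v v' : ℝ, v ≠ v' →
      |c₃ (u + (v' - v) * Real.log |v' - v|) v' - c₃ u v
          - Real.log |v' - v| * (g v' - g v)| ≤ L * |v' - v|)
    (v₁ v₂ : ℝ) (hg₁ : DifferentiableAt ℝ g v₁) (hg₂ : DifferentiableAt ℝ g v₂) :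
    deriv g v₁ = deriv g v₂ := by
  rcases eq_or_ne v₁ v₂ with rfl | hne
  · rfl
  · have h1 := secant c₃ g L hL h v₁ hg₁ (v₂ - v₁) (sub_ne_zero.mpr hne.symm)
    have h2 := secant c₃ g L hL h v₂ hg₂ (v₁ - v₂) (sub_ne_zero.mpr hne)
    rw [show v₁ + (v₂ - v₁) = v₂ from by ring] at h1
    rw [show v₂ + (v₁ - v₂) = v₁ from by ring] at h2
    have hkey : (v₂ - v₁) * deriv g v₁ = (v₂ - v₁) * deriv g v₂ := by nlinarith [h1, h2]
    exact mul_left_cancel₀ (sub_ne_zero.mpr hne.symm) hkey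
end
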